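/- arXiv:1312.1017 — 4 statements merged into one kernel-verified Lean document; each statement's English description precedes it below -/
import Mathlib

section
/- For any finite game with c players, at most n actions per player, integral payoffs bounded above by a ≥ 0 and below by b ≤ 0 with a - b > 0, any correlated strategy σ (a probability distribution over action profiles) with expected payoff vector p, and any polynomial bound q(n) ≥ 1, there exists a finite sequence of action profiles of length at most w(n) = ((a-b)q(n)+1)·n^c in which each action profile a appears exactly ⌊w(n)·σ(a)⌋ times, such that for every player i, the average payoff of player i over the sequence is at least p_i - 1/q(n). -/
/-!
Play each profile `x` exactly `k x = ⌊w σ(x)⌋` times. Writing `w σ(x) = k x + ε x` with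
`0 ≤ ε x < 1`, the payoff total of player `i` minus `(∑ k) · pᵢ` is
`∑ ε x (pᵢ - u i x) ≥ -N (a - b)` (as `b ≤ pᵢ`) for `N ≤ n ^ c` profiles, while the
length `∑ k` exceeds `w - N ≥ (a - b) q N`. Hence the average falls short of `pᵢ` by at most `1 / q`.
-/

open Finset

section ListOfCounts

variable {X : Type*} [Fintype X]

noncomputable def listOfCounts (k : X → ℕ) : List X :=
  univ.toList.flatMap fun x => List.replicate (k x) x

theorem count_listOfCounts [DecidableEq X] (k : X → ℕ) (x : X) :
    (listOfCounts k).count x = k x := by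
  simp [listOfCounts, List.count_flatMap, List.count_replicate]

theorem length_listOfCounts (k : X → ℕ) : (listOfCounts k).length = ∑ x, k x := by
  simp [listOfCounts, List.length_flatMap]

theorem sum_map_listOfCounts (k : X → ℕ) (f : X → ℝ) :
    ((listOfCounts k).map f).sum = ∑ x, (k x : ℝ) * f x := by
  simp [listOfCounts, List.flatMap, List.sum_flatten, Function.comp_def, nsmul_eq_mul]

end ListOfCounts

section FloorWeights

variable {X : Type*} [Fintype X] {σ : X → ℝ} {W : ℝ}

theorem sum_floor_mul_le (hσ0 : ∀ x, 0 ≤ σ x) (hσ1 : ∑ x, σ x = 1) (hW : 0 ≤ W) :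
    ∑ x, (⌊W * σ x⌋₊ : ℝ) ≤ W :=
  calc ∑ x, (⌊W * σ x⌋₊ : ℝ) ≤ ∑ x, W * σ x :=
        sum_le_sum fun x _ => Nat.floor_le (mul_nonneg hW (hσ0 x))
    _ = W := by rw [← mul_sum, hσ1, mul_one]

theorem sub_card_lt_sum_floor_mul [Nonempty X] (hσ1 : ∑ x, σ x = 1) :
    W - Fintype.card X < ∑ x, (⌊W * σ x⌋₊ : ℝ) :=
  calc W - Fintype.card X = ∑ x, (W * σ x - 1) := by
        rw [sum_sub_distrib, ← mul_sum, hσ1, mul_one, sum_const, card_univ, nsmul_one]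
    _ < ∑ x, (⌊W * σ x⌋₊ : ℝ) :=
        sum_lt_sum_of_nonempty univ_nonempty fun x _ => by
          linarith [Nat.lt_floor_add_one (W * σ x)]

theorem sum_floor_mul_mul_ge (hσ0 : ∀ x, 0 ≤ σ x) (hσ1 : ∑ x, σ x = 1) (hW : 0 ≤ W)
    {f : X → ℝ} {lo hi : ℝ} (hf : ∀ x, lo ≤ f x ∧ f x ≤ hi) :
    (∑ x, (⌊W * σ x⌋₊ : ℝ)) * ∑ x, σ x * f x - Fintype.card X * (hi - lo)
      ≤ ∑ x, (⌊W * σ x⌋₊ : ℝ) * f x := by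
  set E := ∑ x, σ x * f x
  have hE : lo ≤ E :=
    calc lo = ∑ x, σ x * lo := by rw [← sum_mul, hσ1, one_mul]
      _ ≤ E := sum_le_sum fun x _ => mul_le_mul_of_nonneg_left (hf x).1 (hσ0 x)
  have hcentered : ∑ x, W * σ x * (f x - E) = 0 := by
    simp only [mul_assoc, ← mul_sum, mul_sub, sum_sub_distrib, ← sum_mul, hσ1, one_mul]
    exact sub_self _
  -- `W σ x - ⌊W σ x⌋ ∈ [0, 1)` and `E - f x ≥ lo - hi`.
  have hterm : ∀ x ∈ univ, W * σ x * (f x - E) - (hi - lo) ≤ ⌊W * σ x⌋₊ * (f x - E) := by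
    intro x _
    have h0 := Nat.floor_le (mul_nonneg hW (hσ0 x))
    have h1 := Nat.lt_floor_add_one (W * σ x)
    nlinarith [(hf x).1, (hf x).2]
  have hsum := sum_le_sum hterm
  rw [sum_sub_distrib, hcentered, sum_const, card_univ, nsmul_eq_mul] at hsum
  simp only [mul_sub, sum_sub_distrib, ← sum_mul] at hsum
  linarith

end FloorWeights

theorem sub_one_div_le_div {S m E D q : ℝ} (hm : 0 < m) (hq : 0 < q) (hS : m * E - D ≤ S)
    (hD : q * D ≤ m) : E - 1 / q ≤ S / m := by
  have : D ≤ m / q := by rw [le_div_iff₀ hq]; linarith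
  rw [le_div_iff₀ hm]
  calc (E - 1 / q) * m = m * E - m / q := by ring
    _ ≤ S := by linarith

theorem correlated_strategy_sequence_general
    (c n : ℕ) (a b : ℤ) (hab : b < a)
    (A : Fin c → Type) [∀ i, Fintype (A i)] [∀ i, DecidableEq (A i)]
    (hcard : ∀ i, Fintype.card (A i) ≤ n)
    (u : Fin c → (∀ i, A i) → ℤ)
    (hub : ∀ i x, b ≤ u i x ∧ u i x ≤ a)
    (σ : (∀ i, A i) → ℝ) (hσ0 : ∀ x, 0 ≤ σ x) (hσ1 : ∑ x, σ x = 1)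
    (q : ℕ) (hq : 1 ≤ q)
    (w : ℤ) (hw : w = ((a - b) * q + 1) * (n : ℤ) ^ c)
    (p : Fin c → ℝ) (hp : ∀ i, p i = ∑ x, σ x * (u i x : ℝ)) :
    ∃ L : List (∀ i, A i),
      (L.length : ℤ) ≤ w ∧
      (∀ x : ∀ i, A i, (L.count x : ℤ) = ⌊(w : ℝ) * σ x⌋) ∧
      (∀ i : Fin c,
        (((L.map (fun x => (u i x : ℝ))).sum) / (L.length : ℝ)) ≥ p i - 1 / (q : ℝ)) := by
  have : Nonempty (∀ i, A i) := by
    by_contra h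
    simp [not_nonempty_iff.mp h] at hσ1
  set N := Fintype.card (∀ i, A i)
  have hN : N ≤ n ^ c :=
    calc N = ∏ i, Fintype.card (A i) := Fintype.card_pi
      _ ≤ n ^ c := by simpa using prod_le_pow_card univ _ n fun i _ => hcard i
  have habq : (0 : ℤ) ≤ (a - b) * q := mul_nonneg (sub_nonneg.2 hab.le) q.cast_nonneg
  have habqN : (0 : ℤ) ≤ (a - b) * q * N := mul_nonneg habq N.cast_nonneg
  have hwN : (a - b) * q * N + N ≤ w := by
    rw [hw]; nlinarith [mul_le_mul_of_nonneg_left (by exact_mod_cast hN : (N : ℤ) ≤ n ^ c) habq]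
  have hw0 : (0 : ℝ) ≤ w := by exact_mod_cast (add_nonneg habqN N.cast_nonneg).trans hwN
  have hlength : ((a : ℝ) - b) * q * N < ∑ x, (⌊(w : ℝ) * σ x⌋₊ : ℝ) := by
    have : ((a : ℝ) - b) * q * N + N ≤ w := by exact_mod_cast hwN
    linarith [sub_card_lt_sum_floor_mul (W := (w : ℝ)) hσ1]
  have hlength_pos : 0 < ∑ x, (⌊(w : ℝ) * σ x⌋₊ : ℝ) :=
    lt_of_le_of_lt (by exact_mod_cast habqN) hlength
  refine ⟨listOfCounts fun x => ⌊(w : ℝ) * σ x⌋₊, ?_, fun x => ?_, fun i => ?_⟩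
  · rw [length_listOfCounts]
    exact_mod_cast sum_floor_mul_le hσ0 hσ1 hw0
  · rw [count_listOfCounts, Int.natCast_floor_eq_floor (mul_nonneg hw0 (hσ0 x))]
  · rw [sum_map_listOfCounts, length_listOfCounts, Nat.cast_sum, hp i]
    refine sub_one_div_le_div (D := N * ((a : ℝ) - b)) hlength_pos (by exact_mod_cast hq)
      (sum_floor_mul_mul_ge hσ0 hσ1 hw0 fun x => ?_) (by linarith)
    exact_mod_cast hub i x

/-- existence of a finite sequence realizing a correlated strategy's
payoff up to 1/q, each profile appearing exactly ⌊w·σ(a)⌋ times. -/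
theorem correlated_strategy_sequence
    (c n : ℕ) (a b : ℤ) (ha : 0 ≤ a) (hb : b ≤ 0) (hab : b < a)
    (A : Fin c → Type) [∀ i, Fintype (A i)] [∀ i, DecidableEq (A i)]
    (hcard : ∀ i, Fintype.card (A i) ≤ n)
    (u : Fin c → (∀ i, A i) → ℤ)
    (hub : ∀ i x, b ≤ u i x ∧ u i x ≤ a)
    (σ : (∀ i, A i) → ℝ) (hσ0 : ∀ x, 0 ≤ σ x) (hσ1 : ∑ x, σ x = 1)
    (q : ℕ) (hq : 1 ≤ q)
    (w : ℤ) (hw : w = ((a - b) * q + 1) * (n : ℤ) ^ c)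
    (p : Fin c → ℝ) (hp : ∀ i, p i = ∑ x, σ x * (u i x : ℝ)) :
    ∃ L : List (∀ i, A i),
      (L.length : ℤ) ≤ w ∧
      (∀ x : ∀ i, A i, (L.count x : ℤ) = ⌊(w : ℝ) * σ x⌋) ∧
      (∀ i : Fin c,
        (((L.map (fun x => (u i x : ℝ))).sum) / (L.length : ℝ)) ≥ p i - 1 / (q : ℝ)) :=
  correlated_strategy_sequence_general c n a b hab A hcard u hub σ hσ0 hσ1 q hq w hw p hp
end

section
/- Let (x_0,...,x_{w-1}) be a finite sequence of real numbers each lying in an interval of length r = a - b (with all x_k - p having average 0 over the sequence, where p is the average of the sequence). If the sequence is repeated infinitely and payoffs are discounted, i.e., the discounted value is v = δ·Σ_{t=0}^∞ (1-δ)^{tw} Σ_{k=0}^{w-1} x_k (1-δ)^k, then for any q ≥ 1, if δ ≤ 1/(r·w·q), we have v ≥ p - 1/q. -/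
set_option maxHeartbeats 1600000

/-- discounted value of repeating a finite sequence is at least its
average minus 1/q, provided δ ≤ 1/(r·w·q). -/
theorem discounted_repeat_close_to_average
    (w : ℕ) (hw : 0 < w) (x : Fin w → ℝ) (a b : ℝ) (hab : b < a)
    (hx : ∀ k, b ≤ x k ∧ x k ≤ a)
    (r : ℝ) (hr : r = a - b)
    (p : ℝ) (hp : p = (∑ k, x k) / (w : ℝ))
    (δ : ℝ) (hδ0 : 0 < δ) (hδ1 : δ < 1)
    (q : ℝ) (hq : 1 ≤ q)
    (hδ : δ ≤ 1 / (r * w * q))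
    (v : ℝ)
    (hv : v = δ * ∑' t : ℕ, (1 - δ) ^ (t * w) * ∑ k : Fin w, x k * (1 - δ) ^ (k : ℕ)) :
    v ≥ p - 1 / q := by
  set β := 1 - δ with hβ
  have hβ0 : 0 ≤ β := by rw [hβ]; linarith
  have hβ1 : β < 1 := by rw [hβ]; linarith
  have hpow : β ^ w < 1 := pow_lt_one₀ hβ0 hβ1 hw.ne'
  set D := 1 - β ^ w with hDdef
  have hD0 : 0 < D := by rw [hDdef]; linarith
  set T := ∑ k : Fin w, x k * β ^ (k : ℕ) with hT
  have hgeo : ∑' t : ℕ, β ^ (t * w) = D⁻¹ := by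
    have h1 : ∀ t : ℕ, β ^ (t * w) = (β ^ w) ^ t := fun t => by
      rw [← pow_mul, mul_comm]
    simp_rw [h1]
    rw [tsum_geometric_of_lt_one (pow_nonneg hβ0 w) hpow]
  have hv' : v = δ * (D⁻¹ * T) := by
    rw [hv, tsum_mul_right, hgeo]
  set S := ∑ k : Fin w, β ^ (k : ℕ) with hSdef
  have hS : δ * S = D := by
    have hβne : β ≠ 1 := ne_of_lt hβ1
    rw [hSdef, Fin.sum_univ_eq_sum_range, geom_sum_eq hβne]
    have hβd : β - 1 = -δ := by rw [hβ]; ring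
    rw [hβd, hDdef, div_neg, mul_neg, mul_comm δ ((β ^ w - 1) / δ),
      div_mul_cancel₀ _ hδ0.ne']
    ring
  clear_value β D T S
  have hw0 : (0 : ℝ) < w := by exact_mod_cast hw
  have hr0 : 0 < r := by rw [hr]; linarith
  have hq0 : 0 < q := lt_of_lt_of_le one_pos hq
  have hwp : (w : ℝ) * p = ∑ k, x k := by rw [hp]; field_simp
  have hp_le : p ≤ a := by
    have h1 : ∑ k, x k ≤ ∑ _k : Fin w, a := Finset.sum_le_sum fun k _ => (hx k).2
    have h2 : ∑ _k : Fin w, a = (w : ℝ) * a := by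
      simp [Finset.sum_const, Finset.card_univ, mul_comm]
    nlinarith [hwp]
  have hsum0 : ∑ k : Fin w, (x k - p) = 0 := by
    rw [Finset.sum_sub_distrib, Finset.sum_const, Finset.card_univ, Fintype.card_fin]
    rw [nsmul_eq_mul]
    linarith [hwp]
  -- Bernoulli
  have hBern : ∀ n : ℕ, 1 - (n : ℝ) * δ ≤ β ^ n := fun n => by
    have h := one_add_mul_le_pow (show (-2 : ℝ) ≤ -δ by linarith) n
    have he : (1 : ℝ) + -δ = β := by rw [hβ]; ring
    rw [he] at h
    linarith
  have hDw : D ≤ (w : ℝ) * δ := by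
    have := hBern w
    rw [hDdef]; linarith
  have hc1 : 1 - β ^ (w - 1) ≤ (w : ℝ) * δ := by
    have h1 := hBern (w - 1)
    have h2 : ((w - 1 : ℕ) : ℝ) ≤ (w : ℝ) := by exact_mod_cast Nat.sub_le w 1
    nlinarith
  have hc0 : 0 ≤ β ^ (w - 1) := pow_nonneg hβ0 _
  have hβw1 : ∀ k : Fin w, β ^ (w - 1) ≤ β ^ (k : ℕ) := fun k =>
    pow_le_pow_of_le_one hβ0 hβ1.le (by have := k.isLt; omega)
  have hxk : ∀ k : Fin w, -r ≤ x k - p := fun k => by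
    have := (hx k).1; rw [hr]; linarith [hp_le]
  -- key inequality
  have hkey : -r * (S - (w : ℝ) * β ^ (w - 1)) ≤ ∑ k : Fin w, β ^ (k : ℕ) * (x k - p) := by
    have heq : ∑ k : Fin w, (β ^ (k : ℕ) - β ^ (w - 1)) * (x k - p)
        = ∑ k : Fin w, β ^ (k : ℕ) * (x k - p) := by
      simp_rw [sub_mul]
      rw [Finset.sum_sub_distrib, ← Finset.mul_sum, hsum0, mul_zero, sub_zero]
    rw [← heq]
    have hconst : ∑ k : Fin w, (β ^ (k : ℕ) - β ^ (w - 1)) = S - (w : ℝ) * β ^ (w - 1) := by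
      rw [Finset.sum_sub_distrib, Finset.sum_const, Finset.card_univ, Fintype.card_fin,
        nsmul_eq_mul, hSdef]
    calc -r * (S - (w : ℝ) * β ^ (w - 1))
        = ∑ k : Fin w, (β ^ (k : ℕ) - β ^ (w - 1)) * (-r) := by
          rw [← Finset.sum_mul, hconst]; ring
      _ ≤ ∑ k : Fin w, (β ^ (k : ℕ) - β ^ (w - 1)) * (x k - p) :=
          Finset.sum_le_sum fun k _ =>
            mul_le_mul_of_nonneg_left (hxk k) (by linarith [hβw1 k])
  have hrwδ : r * (w : ℝ) * δ * q ≤ 1 := by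
    have h1 : δ * (r * w * q) ≤ 1 := (le_div_iff₀ (by positivity)).mp hδ
    nlinarith
  -- r * (D - w δ β^{w-1}) ≤ D / q
  have key2 : r * (D - (w : ℝ) * δ * β ^ (w - 1)) ≤ D / q := by
    have e1 : D - (w : ℝ) * δ * β ^ (w - 1) ≤ D * (1 - β ^ (w - 1)) := by
      nlinarith [mul_nonneg hc0 (sub_nonneg.mpr hDw)]
    have e2 : r * (1 - β ^ (w - 1)) ≤ 1 / q := by
      rw [le_div_iff₀ hq0]
      nlinarith [mul_le_mul_of_nonneg_left hc1 (mul_nonneg hr0.le hq0.le)]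
    have e3 : r * (D * (1 - β ^ (w - 1))) ≤ D * (1 / q) := by
      calc r * (D * (1 - β ^ (w - 1))) = D * (r * (1 - β ^ (w - 1))) := by ring
        _ ≤ D * (1 / q) := mul_le_mul_of_nonneg_left e2 hD0.le
    calc r * (D - (w : ℝ) * δ * β ^ (w - 1)) ≤ r * (D * (1 - β ^ (w - 1))) :=
          mul_le_mul_of_nonneg_left e1 hr0.le
      _ ≤ D * (1 / q) := e3
      _ = D / q := by ring
  have hTexp : ∑ k : Fin w, β ^ (k : ℕ) * (x k - p) = T - S * p := by
    rw [hT, hSdef, Finset.sum_mul, ← Finset.sum_sub_distrib]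
    exact Finset.sum_congr rfl fun k _ => by ring
  -- δ T - D p ≥ -(D/q)
  have hmain : D * (p - 1 / q) ≤ δ * T := by
    have h1 : δ * (-r * (S - (w : ℝ) * β ^ (w - 1))) ≤ δ * (T - S * p) := by
      rw [← hTexp]
      exact mul_le_mul_of_nonneg_left hkey hδ0.le
    have h2 : δ * (-r * (S - (w : ℝ) * β ^ (w - 1)))
        = -(r * (D - (w : ℝ) * δ * β ^ (w - 1))) := by rw [← hS]; ring
    have h3 : δ * (T - S * p) = δ * T - D * p := by rw [← hS]; ring
    rw [h2, h3] at h1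
    have h4 : D * (p - 1 / q) = D * p - D / q := by ring
    linarith [key2, h1]
  rw [hv', ge_iff_le]
  calc p - 1 / q ≤ δ * T / D := by
        rw [le_div_iff₀ hD0]
        have h4 : D * (p - 1 / q) = D * p - D / q := by ring
        nlinarith [hmain]
    _ = δ * (D⁻¹ * T) := by field_simp
end

section
/- Let Y_t, for t ≥ 0, be a sequence of real numbers such that the sum of the negative terms over any block of length w equals P_neg ≤ 0 and the sum of positive terms equals -P_neg, with each Y_t ≥ v' where v' ≥ -r. Then the discounted sum δ·Σ_{t=0}^∞ (1-δ)^t Y_t is minimized (over rearrangements within blocks) when all negative payoff is received at the start of each block and all positive payoff at the end, and in that worst case, for δ ≤ 1/(r·w·q), the discounted sum is at least δ·P_neg ≥ -1/q. -/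
/-!
Since `Y` is `w`-periodic, the discounted series is `(1 - (1 - δ) ^ w)⁻¹` times the discounted
sum over one block. Within a block a negative term loses nothing by being paid first, and a
positive term is discounted by at least `(1 - δ) ^ (w - 1)`, so the block sum is at least
`P_neg + (-P_neg) (1 - δ) ^ (w - 1)`; the remaining two inequalities are elementary.
-/

open Finset

theorem hasSum_pow_mul_mod {𝕜 : Type*} [NormedField 𝕜] [CompleteSpace 𝕜] {w : ℕ} (hw : 0 < w)
    {x : 𝕜} (hx : ‖x‖ < 1) (Z : Fin w → 𝕜) :
    HasSum (fun t : ℕ => x ^ t * Z ⟨t % w, Nat.mod_lt t hw⟩)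
      ((1 - x ^ w)⁻¹ * ∑ k : Fin w, x ^ (k : ℕ) * Z k) := by
  have : NeZero w := ⟨hw.ne'⟩
  have hxw : ‖x ^ w‖ < 1 := by rw [norm_pow]; exact pow_lt_one₀ (norm_nonneg x) hx hw.ne'
  set block : Fin w → 𝕜 := fun k => x ^ (k : ℕ) * Z k
  have hblocks : HasSum (fun p : ℕ × Fin w => (x ^ w) ^ p.1 * block p.2)
      ((1 - x ^ w)⁻¹ * ∑ k, block k) :=
    (hasSum_geometric_of_norm_lt_one hxw).mul (hasSum_fintype block) <|
      summable_mul_of_summable_norm (summable_norm_geometric_of_norm_lt_one hxw)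
        .of_finite
  convert (Nat.divModEquiv w).hasSum_iff.mpr hblocks using 2 with t
  have hmod : Fin.ofNat w t = ⟨t % w, Nat.mod_lt t hw⟩ := Fin.ext (Fin.val_ofNat ..)
  simp only [block, Function.comp_apply, Nat.divModEquiv_apply, hmod, ← pow_mul, ← mul_assoc,
    ← pow_add, Nat.div_add_mod]

theorem min_add_max_mul_le_mul {a y z : ℝ} (hyz : y ≤ z) (hz : z ≤ 1) :
    min a 0 + max a 0 * y ≤ z * a := by
  have hmin : min a 0 ≤ z * min a 0 := by nlinarith [min_le_right a 0]
  have hmax : max a 0 * y ≤ z * max a 0 := by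
    rw [mul_comm]; exact mul_le_mul_of_nonneg_right hyz (le_max_right a 0)
  calc min a 0 + max a 0 * y ≤ z * min a 0 + z * max a 0 := add_le_add hmin hmax
    _ = z * a := by rw [← mul_add, min_add_max, add_zero]

theorem sum_min_add_sum_max_mul_pow_le {w : ℕ} {x : ℝ} (hx0 : 0 ≤ x) (hx1 : x ≤ 1)
    (Z : Fin w → ℝ) :
    ∑ k, min (Z k) 0 + (∑ k, max (Z k) 0) * x ^ (w - 1) ≤ ∑ k : Fin w, x ^ (k : ℕ) * Z k := by
  rw [sum_mul, ← sum_add_distrib]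
  exact sum_le_sum fun k _ => min_add_max_mul_le_mul
    (pow_le_pow_of_le_one hx0 hx1 (by omega)) (pow_le_one₀ hx0 hx1)

theorem le_mul_one_div_one_sub_pow {P x : ℝ} {w : ℕ} (hP : P ≤ 0) (hx0 : 0 ≤ x) (hx1 : x < 1)
    (hw : 1 ≤ w) : P ≤ (P + -P * x ^ (w - 1)) * (1 / (1 - x ^ w)) := by
  have hxw : x ^ w ≤ x ^ (w - 1) := pow_le_pow_of_le_one hx0 hx1.le (Nat.sub_le w 1)
  have hpos : 0 < 1 - x ^ w := sub_pos.mpr (pow_lt_one₀ hx0 hx1 (by omega))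
  rw [mul_one_div, le_div_iff₀ hpos]
  nlinarith

theorem neg_one_div_le_mul_of_abs_le {δ P a q : ℝ} (hδ : 0 < δ) (hq : 0 < q) (hP : |P| ≤ a)
    (hδa : δ ≤ 1 / (a * q)) : -(1 / q) ≤ δ * P := by
  have haq : 0 < a * q := one_div_pos.mp (hδ.trans_le hδa)
  have hδa' : δ * a ≤ 1 / q := by
    rw [le_div_iff₀ hq, mul_assoc]
    exact (le_div_iff₀ haq).mp hδa
  calc -(1 / q) ≤ -(δ * |P|) := neg_le_neg (hδa'.trans' (mul_le_mul_of_nonneg_left hP hδ.le))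
    _ = δ * -|P| := by ring
    _ ≤ δ * P := mul_le_mul_of_nonneg_left (neg_abs_le P) hδ.le

theorem worst_case_block_discounting_general
    (w : ℕ) (hw : 1 ≤ w) (δ : ℝ) (hδ0 : 0 < δ) (hδ1 : δ < 1)
    (r q : ℝ) (hq : 0 < q)
    (Pneg : ℝ) (hPneg : Pneg ≤ 0) (hPr : |Pneg| ≤ r * w)
    (Z : Fin w → ℝ)
    (hneg : ∑ k, min (Z k) 0 = Pneg)
    (hpos : ∑ k, max (Z k) 0 = -Pneg)
    (Y : ℕ → ℝ) (hY : ∀ t : ℕ, Y t = Z ⟨t % w, Nat.mod_lt t hw⟩)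
    (hδq : δ ≤ 1 / (r * w * q)) :
    δ * ∑' t : ℕ, (1 - δ) ^ t * Y t
        ≥ δ * (Pneg + (-Pneg) * (1 - δ) ^ (w - 1)) * (1 / (1 - (1 - δ) ^ w)) ∧
      δ * (Pneg + (-Pneg) * (1 - δ) ^ (w - 1)) * (1 / (1 - (1 - δ) ^ w)) ≥ δ * Pneg ∧
      δ * Pneg ≥ -(1 / q) := by
  have hx0 : 0 ≤ 1 - δ := by linarith
  have hx1 : 1 - δ < 1 := by linarith
  have hsum : ∑' t : ℕ, (1 - δ) ^ t * Y t
      = (1 - (1 - δ) ^ w)⁻¹ * ∑ k : Fin w, (1 - δ) ^ (k : ℕ) * Z k := by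
    simp_rw [hY]
    exact (hasSum_pow_mul_mod hw (by rwa [Real.norm_of_nonneg hx0]) Z).tsum_eq
  have hblock := sum_min_add_sum_max_mul_pow_le hx0 hx1.le Z
  rw [hneg, hpos] at hblock
  have hfactor : 0 ≤ δ * (1 - (1 - δ) ^ w)⁻¹ :=
    mul_nonneg hδ0.le (inv_nonneg.mpr (sub_nonneg.mpr (pow_le_one₀ hx0 hx1.le)))
  refine ⟨?_, ?_, neg_one_div_le_mul_of_abs_le hδ0 hq hPr hδq⟩
  · rw [hsum, one_div, mul_right_comm, ← mul_assoc]
    exact mul_le_mul_of_nonneg_left hblock hfactor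
  · rw [mul_assoc]
    exact mul_le_mul_of_nonneg_left (le_mul_one_div_one_sub_pow hPneg hx0 hx1 hw) hδ0.le

/-- the discounted sum of a blockwise sequence whose negative parts
sum to P_neg and positive parts to -P_neg per block is minimized by front-loading
the negative payoff, and in the worst case is at least δ·P_neg ≥ -1/q. -/
theorem worst_case_block_discounting
    (w : ℕ) (hw : 1 ≤ w) (δ : ℝ) (hδ0 : 0 < δ) (hδ1 : δ < 1)
    (r q : ℝ) (hr : 0 < r) (hq : 0 < q)
    (Pneg : ℝ) (hPneg : Pneg ≤ 0) (hPr : |Pneg| ≤ r * w)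
    (v' : ℝ) (hv'r : -r ≤ v')
    (Z : Fin w → ℝ) (hZv' : ∀ k, v' ≤ Z k)
    (hneg : ∑ k, min (Z k) 0 = Pneg)
    (hpos : ∑ k, max (Z k) 0 = -Pneg)
    (Y : ℕ → ℝ) (hY : ∀ t : ℕ, Y t = Z ⟨t % w, Nat.mod_lt t hw⟩)
    (hδq : δ ≤ 1 / (r * w * q)) :
    δ * ∑' t : ℕ, (1 - δ) ^ t * Y t
        ≥ δ * (Pneg + (-Pneg) * (1 - δ) ^ (w - 1)) * (1 / (1 - (1 - δ) ^ w)) ∧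
      δ * (Pneg + (-Pneg) * (1 - δ) ^ (w - 1)) * (1 / (1 - (1 - δ) ^ w)) ≥ δ * Pneg ∧
      δ * Pneg ≥ -(1 / q) :=
  worst_case_block_discounting_general w hw δ hδ0 hδ1 r q hq Pneg hPneg hPr Z hneg hpos Y hY hδq
end

section
/- If all players other than i play a correlated punishment strategy against i in every round of the infinitely repeated game (independently across rounds), then for any strategy of player i, player i's normalized discounted expected payoff is at most his minimax value mm_i(G). -/
/-! Against the i.i.d. punishment `σ`, whatever history player i has seen, his expected payoff in
round `t` is a convex combination (weighted by the probabilities of the histories) of the values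
`∑ b, σ b * u a b ≤ mm`, so each round pays at most `mm`; the normalized discounted payoff is a
convex combination of the round payoffs, hence also at most `mm`. -/

open Finset

lemma sum_pi_prod_eq_one {ι B : Type*} [Fintype ι] [DecidableEq ι] [Fintype B] (σ : B → ℝ)
    (hσ1 : ∑ b, σ b = 1) : ∑ h : ι → B, ∏ k, σ (h k) = 1 := by
  rw [← Fintype.prod_sum (fun _ : ι => σ), hσ1, prod_const_one]

lemma sum_mul_le_of_sum_eq_one {ι : Type*} {s : Finset ι} {w f : ι → ℝ} {c : ℝ}
    (hw0 : ∀ i ∈ s, 0 ≤ w i) (hw1 : ∑ i ∈ s, w i = 1) (hf : ∀ i ∈ s, f i ≤ c) :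
    ∑ i ∈ s, w i * f i ≤ c :=
  calc ∑ i ∈ s, w i * f i ≤ ∑ i ∈ s, w i * c :=
        sum_le_sum fun i hi => mul_le_mul_of_nonneg_left (hf i hi) (hw0 i hi)
    _ = c := by rw [← sum_mul, hw1, one_mul]

lemma le_sum_mul_of_sum_eq_one {ι : Type*} {s : Finset ι} {w f : ι → ℝ} {c : ℝ}
    (hw0 : ∀ i ∈ s, 0 ≤ w i) (hw1 : ∑ i ∈ s, w i = 1) (hf : ∀ i ∈ s, c ≤ f i) :
    c ≤ ∑ i ∈ s, w i * f i := by
  have := sum_mul_le_of_sum_eq_one (f := fun i => -f i) hw0 hw1 fun i hi => neg_le_neg (hf i hi)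
  simpa only [mul_neg, sum_neg_distrib, neg_le_neg_iff] using this

lemma summable_one_sub_pow_mul {δ : ℝ} (hδ0 : 0 < δ) (hδ1 : δ ≤ 1) {x : ℕ → ℝ} {m c : ℝ}
    (hm : ∀ t, m ≤ x t) (hc : ∀ t, x t ≤ c) : Summable fun t => (1 - δ) ^ t * x t := by
  have hr0 : 0 ≤ 1 - δ := sub_nonneg.mpr hδ1
  refine .of_norm_bounded ((summable_geometric_of_lt_one hr0 (by linarith)).mul_right
    (max |m| |c|)) fun t => ?_
  rw [Real.norm_eq_abs, abs_mul, abs_pow, abs_of_nonneg hr0]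
  exact mul_le_mul_of_nonneg_left (abs_le_max_abs_abs (hm t) (hc t)) (pow_nonneg hr0 t)

lemma mul_tsum_one_sub_pow_mul_le {δ : ℝ} (hδ0 : 0 < δ) (hδ1 : δ ≤ 1) {x : ℕ → ℝ} {m c : ℝ}
    (hm : ∀ t, m ≤ x t) (hc : ∀ t, x t ≤ c) : δ * ∑' t, (1 - δ) ^ t * x t ≤ c := by
  have hr0 : 0 ≤ 1 - δ := sub_nonneg.mpr hδ1
  have hgeo : HasSum (fun t => (1 - δ) ^ t * c) ((1 - (1 - δ))⁻¹ * c) :=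
    (hasSum_geometric_of_lt_one hr0 (by linarith)).mul_right c
  have hle : ∑' t, (1 - δ) ^ t * x t ≤ δ⁻¹ * c := by
    simpa only [sub_sub_cancel] using
      hasSum_le (fun t => mul_le_mul_of_nonneg_left (hc t) (pow_nonneg hr0 t))
        (summable_one_sub_pow_mul hδ0 hδ1 hm hc).hasSum hgeo
  calc δ * ∑' t, (1 - δ) ^ t * x t ≤ δ * (δ⁻¹ * c) := mul_le_mul_of_nonneg_left hle hδ0.le
    _ = c := by rw [mul_inv_cancel_left₀ hδ0.ne']

theorem repeated_punishment_caps_payoff_general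
    (Ai B : Type) [Fintype Ai] [Nonempty Ai] [Fintype B]
    (u : Ai → B → ℝ)
    (σ : B → ℝ) (hσ0 : ∀ b, 0 ≤ σ b) (hσ1 : ∑ b, σ b = 1)
    (mm : ℝ)
    (hσmm : Finset.univ.sup' Finset.univ_nonempty (fun a : Ai => ∑ b, σ b * u a b) = mm)
    (δ : ℝ) (hδ0 : 0 < δ) (hδ1 : δ < 1)
    (s : (Σ t : ℕ, Fin t → B) → Ai) :
    δ * ∑' t : ℕ, (1 - δ) ^ t *
        ∑ h : Fin t → B, (∏ k, σ (h k)) * ∑ b, σ b * u (s ⟨t, h⟩) b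
      ≤ mm := by
  have hround (h : Σ t : ℕ, Fin t → B) : ∑ b, σ b * u (s h) b ≤ mm :=
    hσmm ▸ le_sup' (fun a : Ai => ∑ b, σ b * u a b) (mem_univ (s h))
  have hw0 (t : ℕ) (h : Fin t → B) : 0 ≤ ∏ k, σ (h k) := prod_nonneg fun k _ => hσ0 (h k)
  have hw1 (t : ℕ) : ∑ h : Fin t → B, ∏ k, σ (h k) = 1 := sum_pi_prod_eq_one σ hσ1
  refine mul_tsum_one_sub_pow_mul_le hδ0 hδ1.le
    (m := univ.inf' univ_nonempty fun a : Ai => ∑ b, σ b * u a b)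
    (fun t => le_sum_mul_of_sum_eq_one (fun h _ => hw0 t h) (hw1 t)
      fun h _ => inf'_le _ (mem_univ _))
    (fun t => sum_mul_le_of_sum_eq_one (fun h _ => hw0 t h) (hw1 t)
      fun h _ => hround ⟨t, h⟩)

/-- if the others play a minimax (punishment) strategy i.i.d. in
every round, then any history-dependent strategy of player i obtains a
normalized discounted expected payoff of at most the minimax value. -/
theorem repeated_punishment_caps_payoff
    (Ai B : Type) [Fintype Ai] [Nonempty Ai] [Fintype B] [Nonempty B]
    (u : Ai → B → ℝ)
    (σ : B → ℝ) (hσ0 : ∀ b, 0 ≤ σ b) (hσ1 : ∑ b, σ b = 1)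
    (mm : ℝ)
    (hmm : mm = sInf {x : ℝ | ∃ τ : B → ℝ, (∀ b, 0 ≤ τ b) ∧ (∑ b, τ b = 1) ∧
      x = Finset.univ.sup' Finset.univ_nonempty (fun a : Ai => ∑ b, τ b * u a b)})
    (hσmm : Finset.univ.sup' Finset.univ_nonempty (fun a : Ai => ∑ b, σ b * u a b) = mm)
    (δ : ℝ) (hδ0 : 0 < δ) (hδ1 : δ < 1)
    (s : (Σ t : ℕ, Fin t → B) → Ai) :
    δ * ∑' t : ℕ, (1 - δ) ^ t *
        ∑ h : Fin t → B, (∏ k, σ (h k)) * ∑ b, σ b * u (s ⟨t, h⟩) b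
      ≤ mm :=
  repeated_punishment_caps_payoff_general Ai B u σ hσ0 hσ1 mm hσmm δ hδ0 hδ1 s
end
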